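/- If G' is a (K_8, K_{2,2,2,2,2}, 5)-cockade and G is obtained from G' by adding a new vertex adjacent to at least six vertices of G', then G contains a K_9^= minor. -/

import Mathlib

open SimpleGraph

/-- The complete 5-partite graph `K_{2,2,2,2,2}`. -/
abbrev K22222 : SimpleGraph (Σ _ : Fin 5, Fin 2) :=
  SimpleGraph.completeMultipartiteGraph fun _ => Fin 2

/-- An `(H₁, H₂, k)`-cockade: any graph isomorphic to `H₁` or `H₂` is one, and identifying
cliques of size `k` in two cockades yields one (expressed via a decomposition of the glued
graph into the two overlapping pieces). -/
inductive IsCockade {α β : Type} (H₁ : SimpleGraph α) (H₂ : SimpleGraph β) (k : ℕ) :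
    {V : Type} → SimpleGraph V → Prop
  | base₁ {V : Type} (G : SimpleGraph V) : Nonempty (G ≃g H₁) → IsCockade H₁ H₂ k G
  | base₂ {V : Type} (G : SimpleGraph V) : Nonempty (G ≃g H₂) → IsCockade H₁ H₂ k G
  | glue {V : Type} (G : SimpleGraph V) (A B : Set V) :
      A ∪ B = Set.univ → ¬ A ⊆ B → ¬ B ⊆ A →
      (A ∩ B).ncard = k → G.IsClique (A ∩ B) →
      (∀ u ∈ A \ B, ∀ v ∈ B \ A, ¬ G.Adj u v) →
      IsCockade H₁ H₂ k (G.induce A) → IsCockade H₁ H₂ k (G.induce B) →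
      IsCockade H₁ H₂ k G

/-- A `(K₈, K_{2,2,2,2,2}, 5)`-cockade. -/
abbrev Cockade85 {V : Type} (G : SimpleGraph V) : Prop :=
  IsCockade (⊤ : SimpleGraph (Fin 8)) K22222 5 G

/-- `H` is a minor of `G`, via branch sets. -/
def IsMinorOf {W V : Type} (H : SimpleGraph W) (G : SimpleGraph V) : Prop :=
  ∃ B : W → Set V,
    (∀ w, (B w).Nonempty) ∧
    (∀ w, (G.induce (B w)).Connected) ∧
    (Pairwise fun w₁ w₂ => Disjoint (B w₁) (B w₂)) ∧
    (∀ w₁ w₂, H.Adj w₁ w₂ → ∃ u ∈ B w₁, ∃ v ∈ B w₂, G.Adj u v)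

/-- `G` contains `K_t` minus two edges as a minor (either of the two nonisomorphic graphs). -/
def HasKEqMinor (t : ℕ) {V : Type} (G : SimpleGraph V) : Prop :=
  ∃ e₁ e₂ : Sym2 (Fin t), e₁ ≠ e₂ ∧ ¬ e₁.IsDiag ∧ ¬ e₂.IsDiag ∧
    IsMinorOf ((⊤ : SimpleGraph (Fin t)).deleteEdges {e₁, e₂}) G


/-- Add to `G` a new vertex (the `none` vertex) adjacent exactly to the vertices in `N`. -/
def addVertex {V : Type} (G : SimpleGraph V) (N : Set V) : SimpleGraph (Option V) where
  Adj a b :=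
    match a, b with
    | some u, some w => G.Adj u w
    | some u, none => u ∈ N
    | none, some w => w ∈ N
    | none, none => False
  symm := ⟨by rintro (_ | u) (_ | w) h <;> first | exact h | exact h.symm⟩
  loopless := ⟨by
    rintro (_ | u) h
    · exact h
    · exact G.loopless.irrefl u h⟩

/-- The graph obtained from `G` by contracting the edge `xy` (the merged vertex is `x`,
and `y` is deleted). -/
def contractEdge {V : Type} (G : SimpleGraph V) (x y : V) :
    SimpleGraph {z : V // z ≠ y} where
  Adj a b := a ≠ b ∧
    (G.Adj a b ∨ ((a : V) = x ∧ G.Adj y b) ∨ ((b : V) = x ∧ G.Adj y a))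
  symm := ⟨by
    rintro a b ⟨hne, h⟩
    refine ⟨hne.symm, ?_⟩
    rcases h with h | ⟨h1, h2⟩ | ⟨h1, h2⟩
    · exact Or.inl h.symm
    · exact Or.inr (Or.inr ⟨h1, h2⟩)
    · exact Or.inr (Or.inl ⟨h1, h2⟩)⟩
  loopless := ⟨fun a h => h.1 rfl⟩

/-- The join of two graphs. -/
def joinGraph {α β : Type} (G : SimpleGraph α) (H : SimpleGraph β) : SimpleGraph (α ⊕ β) where
  Adj a b :=
    match a, b with
    | .inl a, .inl b => G.Adj a b
    | .inr a, .inr b => H.Adj a b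
    | .inl _, .inr _ => True
    | .inr _, .inl _ => True
  symm := ⟨by rintro (a | a) (b | b) h <;> first | exact h.symm | trivial⟩
  loopless := ⟨by rintro (a | a) h; exacts [G.loopless.irrefl a h, H.loopless.irrefl a h]⟩

/-- The disjoint union of two graphs. -/
def disjUnionGraph {α β : Type} (G : SimpleGraph α) (H : SimpleGraph β) :
    SimpleGraph (α ⊕ β) where
  Adj a b :=
    match a, b with
    | .inl a, .inl b => G.Adj a b
    | .inr a, .inr b => H.Adj a b
    | .inl _, .inr _ => False
    | .inr _, .inl _ => False
  symm := ⟨by rintro (a | a) (b | b) h <;> first | exact h.symm | exact h⟩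
  loopless := ⟨by rintro (a | a) h; exacts [G.loopless.irrefl a h, H.loopless.irrefl a h]⟩

/-- The cycle graph `C_n` on `ZMod n`. -/
def cycleG (n : ℕ) [NeZero n] : SimpleGraph (ZMod n) :=
  SimpleGraph.fromRel fun i j => i - j = 1

/-- The Petersen graph, as the Kneser graph on 2-element subsets of a 5-element set. -/
def petersen : SimpleGraph {s : Finset (Fin 5) // s.card = 2} where
  Adj a b := Disjoint a.1 b.1
  symm := ⟨fun _ _ h => h.symm⟩
  loopless := ⟨by
    intro a h
    have h2 := a.2
    rw [disjoint_self.mp h] at h2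
    simp at h2⟩

/-- `G` is `k`-connected: more than `k` vertices, and removing fewer than `k` vertices
leaves a connected graph. -/
def IsKConnected {V : Type} [Fintype V] (k : ℕ) (G : SimpleGraph V) : Prop :=
  k < Fintype.card V ∧ ∀ S : Set V, S.ncard < k → (G.induce Sᶜ).Connected

/-- `G - v` has a `K₄` minor rooted at the 4-element set `T` (with `v ∉ T`): four disjoint
branch sets avoiding `v`, each inducing a connected subgraph, each meeting `T` in exactly
one vertex, and pairwise joined by an edge. -/
def HasRootedK4MinorAvoiding {V : Type} (G : SimpleGraph V) (T : Set V) (v : V) : Prop :=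
  ∃ (t : Fin 4 → V) (B : Fin 4 → Set V),
    Function.Injective t ∧ Set.range t = T ∧
    (∀ i, v ∉ B i) ∧ (∀ i, B i ∩ T = {t i}) ∧
    (∀ i, (G.induce (B i)).Connected) ∧
    (Pairwise fun i j => Disjoint (B i) (B j)) ∧
    (Pairwise fun i j => ∃ a ∈ B i, ∃ b ∈ B j, G.Adj a b)


/-! The proof is by induction on the cockade `G'`; write `v` for the new vertex. For `K₈`, the
graph `G` is already `K₉` minus at most two edges. For `K_{2,2,2,2,2}`, by pigeonhole `v` sees both
vertices of some part, and an explicit model with two contracted edges works.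

For a clique-sum of `G'[A]` and `G'[B]` along the 5-clique `A ∩ B`, if all neighbours of `v` lie
on one side, induction applies there. Otherwise `v` has a neighbour `w ∈ B \ A` and a neighbour
`a ∈ A \ B`. In every cockade, each vertex outside a 5-clique lies in a connected set that avoids
the clique and sees all of it; contracting such a set through `w` into `v` makes `v` adjacent to
the six vertices `(A ∩ B) ∪ {a}` of `G'[A]`, and induction on `G'[A]` finishes. -/

variable {U V W : Type}

namespace SimpleGraph

lemma induce_singleton_connected (G : SimpleGraph V) (v : V) : (G.induce {v}).Connected := by
  rw [induce_singleton_eq_top]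
  exact connected_top

lemma Connected.induce_image {G : SimpleGraph V} {G' : SimpleGraph W} (f : G →g G')
    {s : Set V} (hs : (G.induce s).Connected) : (G'.induce (f '' s)).Connected := by
  let g : G.induce s →g G'.induce (f '' s) :=
    ⟨fun x => ⟨f x, x.1, x.2, rfl⟩, fun h => f.map_adj h⟩
  refine hs.map g ?_
  rintro ⟨_, x, hx, rfl⟩
  exact ⟨⟨x, hx⟩, rfl⟩

lemma induce_biUnion_connected (G : SimpleGraph V) {K : SimpleGraph U} {S : Set U}
    {B : U → Set V} (hS : (K.induce S).Connected) (hB : ∀ i ∈ S, (G.induce (B i)).Connected)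
    (hK : ∀ i ∈ S, ∀ j ∈ S, K.Adj i j → ∃ a ∈ B i, ∃ b ∈ B j, G.Adj a b) :
    (G.induce (⋃ i ∈ S, B i)).Connected := by
  set T := ⋃ i ∈ S, B i
  have hBT : ∀ i ∈ S, B i ⊆ T := fun i hi => Set.subset_biUnion_of_mem hi
  have within : ∀ i (hi : i ∈ S) u (hu : u ∈ B i) v (hv : v ∈ B i),
      (G.induce T).Reachable ⟨u, hBT i hi hu⟩ ⟨v, hBT i hi hv⟩ := fun i hi u hu v hv =>
    ((hB i hi).preconnected ⟨u, hu⟩ ⟨v, hv⟩).map (induceHomOfLE G (hBT i hi)).toHom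
  have along : ∀ (i j : S), (K.induce S).Walk i j → ∀ u (hu : u ∈ B i) v (hv : v ∈ B j),
      (G.induce T).Reachable ⟨u, hBT i i.2 hu⟩ ⟨v, hBT j j.2 hv⟩ := by
    intro i j p
    induction p with
    | @nil i => exact fun u hu v hv => within i i.2 u hu v hv
    | @cons i k j hik _ ih =>
      intro u hu v hv
      obtain ⟨a, ha, b, hb, hab⟩ := hK i i.2 k k.2 hik
      have hab' : (G.induce T).Adj ⟨a, hBT i i.2 ha⟩ ⟨b, hBT k k.2 hb⟩ := hab
      exact (within i i.2 u hu a ha).trans (hab'.reachable.trans (ih b hb v hv))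
  obtain ⟨i₀⟩ := hS.nonempty
  obtain ⟨u₀, hu₀⟩ := (hB i₀ i₀.2).nonempty
  have : Nonempty T := ⟨⟨u₀, hBT i₀ i₀.2 hu₀⟩⟩
  refine ⟨fun ⟨u, hu⟩ ⟨v, hv⟩ => ?_⟩
  obtain ⟨i, hi, hui⟩ := Set.mem_iUnion₂.mp hu
  obtain ⟨j, hj, hvj⟩ := Set.mem_iUnion₂.mp hv
  exact along ⟨i, hi⟩ ⟨j, hj⟩ (hS.preconnected _ _).some u hui v hvj

lemma IsClique.image {G : SimpleGraph V} {G' : SimpleGraph W} {C : Set V}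
    (hC : G.IsClique C) (f : G →g G') : G'.IsClique (f '' C) := by
  rintro _ ⟨a, ha, rfl⟩ _ ⟨b, hb, rfl⟩ hab
  exact f.map_adj (hC ha hb (ne_of_apply_ne f hab))

end SimpleGraph

open SimpleGraph

lemma IsMinorOf.trans {H : SimpleGraph U} {K : SimpleGraph W} {G : SimpleGraph V}
    (hHK : IsMinorOf H K) (hKG : IsMinorOf K G) : IsMinorOf H G := by
  obtain ⟨P, hPne, hPc, hPd, hPadj⟩ := hHK
  obtain ⟨Q, hQne, hQc, hQd, hQadj⟩ := hKG
  refine ⟨fun w => ⋃ k ∈ P w, Q k, fun w => ?_, fun w => ?_, fun w₁ w₂ hw => ?_,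
    fun w₁ w₂ hw => ?_⟩
  · obtain ⟨k, hk⟩ := hPne w
    exact (hQne k).mono (Set.subset_biUnion_of_mem hk)
  · exact G.induce_biUnion_connected (hPc w) (fun k _ => hQc k)
      (fun k _ l _ hkl => hQadj k l hkl)
  · refine Set.disjoint_iUnion₂_left.mpr fun k₁ hk₁ => Set.disjoint_iUnion₂_right.mpr
      fun k₂ hk₂ => hQd ?_
    rintro rfl
    exact Set.disjoint_left.mp (hPd hw) hk₁ hk₂
  · obtain ⟨k₁, hk₁, k₂, hk₂, hk⟩ := hPadj w₁ w₂ hw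
    obtain ⟨a, ha, b, hb, hab⟩ := hQadj k₁ k₂ hk
    exact ⟨a, Set.mem_biUnion hk₁ ha, b, Set.mem_biUnion hk₂ hb, hab⟩

lemma HasKEqMinor.of_isMinorOf {t : ℕ} {H : SimpleGraph W} {G : SimpleGraph V}
    (h : HasKEqMinor t H) (hHG : IsMinorOf H G) : HasKEqMinor t G := by
  obtain ⟨e₁, e₂, he, he₁, he₂, hm⟩ := h
  exact ⟨e₁, e₂, he, he₁, he₂, hm.trans hHG⟩

lemma isMinorOf_of_pairs {H : SimpleGraph U} {G : SimpleGraph V} (f g : U → V)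
    (hconn : ∀ u, f u = g u ∨ G.Adj (f u) (g u))
    (hdisj : ∀ u₁ u₂, u₁ ≠ u₂ → f u₁ ≠ f u₂ ∧ f u₁ ≠ g u₂ ∧ g u₁ ≠ f u₂ ∧ g u₁ ≠ g u₂)
    (hadj : ∀ u₁ u₂, H.Adj u₁ u₂ → G.Adj (f u₁) (f u₂) ∨ G.Adj (f u₁) (g u₂) ∨
      G.Adj (g u₁) (f u₂) ∨ G.Adj (g u₁) (g u₂)) :
    IsMinorOf H G := by
  refine ⟨fun u => {f u, g u}, fun u => Set.insert_nonempty _ _, fun u => ?_,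
    fun u₁ u₂ hu => ?_, fun u₁ u₂ hu => ?_⟩
  · show (G.induce {f u, g u}).Connected
    rcases hconn u with h | h
    · rw [h, Set.pair_eq_singleton]
      exact induce_singleton_connected G _
    · exact induce_pair_connected_of_adj h
  · obtain ⟨h₁, h₂, h₃, h₄⟩ := hdisj u₁ u₂ hu
    simp [h₁.symm, h₂.symm, h₃.symm, h₄.symm]
  · rcases hadj u₁ u₂ hu with h | h | h | h
    exacts [⟨_, Set.mem_insert _ _, _, Set.mem_insert _ _, h⟩,
      ⟨_, Set.mem_insert _ _, _, Set.mem_insert_of_mem _ rfl, h⟩,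
      ⟨_, Set.mem_insert_of_mem _ rfl, _, Set.mem_insert _ _, h⟩,
      ⟨_, Set.mem_insert_of_mem _ rfl, _, Set.mem_insert_of_mem _ rfl, h⟩]

lemma isMinorOf_of_injective {H : SimpleGraph W} {G : SimpleGraph V} (f : H →g G)
    (hf : Function.Injective f) : IsMinorOf H G :=
  isMinorOf_of_pairs f f (fun _ => Or.inl rfl)
    (fun _ _ h => ⟨hf.ne h, hf.ne h, hf.ne h, hf.ne h⟩) fun _ _ h => Or.inl (f.map_adj h)

lemma hasKEqMinor_of_deleteEdges_le {t : ℕ} [Fintype W] {G : SimpleGraph W}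
    (hW : Fintype.card W = t) {e₁ e₂ : Sym2 W} (he : e₁ ≠ e₂) (he₁ : ¬ e₁.IsDiag)
    (he₂ : ¬ e₂.IsDiag) (hG : (⊤ : SimpleGraph W).deleteEdges {e₁, e₂} ≤ G) :
    HasKEqMinor t G := by
  subst hW
  set σ := Fintype.equivFin W
  refine ⟨e₁.map σ, e₂.map σ, (Sym2.map.injective σ.injective).ne he,
    by rwa [Sym2.isDiag_map σ.injective], by rwa [Sym2.isDiag_map σ.injective],
    isMinorOf_of_injective ⟨σ.symm, fun {i j} hij => hG ?_⟩ σ.symm.injective⟩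
  rw [deleteEdges_adj] at hij ⊢
  refine ⟨σ.symm.injective.ne hij.1, fun h => hij.2 ?_⟩
  simpa [Set.image_pair] using Set.mem_image_of_mem (Sym2.map σ) h

section addVertex

variable {G : SimpleGraph V} {N : Set V}

lemma addVertex_isMinorOf_of_injective {H : SimpleGraph W} {M : Set W} (f : H →g G)
    (hf : Function.Injective f) (hMN : ∀ w ∈ M, f w ∈ N) :
    IsMinorOf (addVertex H M) (addVertex G N) := by
  refine isMinorOf_of_injective ⟨Option.map f, ?_⟩ (Option.map_injective hf)
  rintro (_ | a) (_ | b) hab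
  exacts [hab.elim, hMN b hab, hMN a hab, f.map_adj hab]

lemma addVertex_induce_insert_none_connected {X : Set V} (hX : (G.induce X).Connected)
    {w : V} (hwX : w ∈ X) (hwN : w ∈ N) :
    ((addVertex G N).induce (insert none (some '' X))).Connected := by
  rw [Set.insert_eq]
  exact connected_induce_union (induce_singleton_connected _ none).preconnected
    (hX.induce_image (⟨some, id⟩ : G →g addVertex G N)).preconnected rfl ⟨w, hwX, rfl⟩ hwN

/-- Contract `X` into the new vertex and delete everything outside `D ∪ X`. -/
lemma addVertex_induce_isMinorOf_of_contract {D X : Set V} (hXD : Disjoint X D)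
    (hX : ((addVertex G N).induce (insert none (some '' X))).Connected) {M : Set D}
    (hM : ∀ d ∈ M, ↑d ∈ N ∨ ∃ x ∈ X, G.Adj x d) :
    IsMinorOf (addVertex (G.induce D) M) (addVertex G N) := by
  have hXd : ∀ d : D, some d.1 ∉ some '' X := by
    rintro d ⟨x, hx, hxd⟩
    exact Set.disjoint_left.mp hXD hx (Option.some_injective _ hxd ▸ d.2)
  refine ⟨fun o => o.elim (insert none (some '' X)) fun d => {some d.1}, ?_, ?_, ?_, ?_⟩
  · rintro (_ | d)
    exacts [Set.insert_nonempty _ _, Set.singleton_nonempty _]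
  · rintro (_ | d)
    exacts [hX, induce_singleton_connected _ _]
  · rintro (_ | d) (_ | e) hde
    · exact (hde rfl).elim
    · exact Set.disjoint_singleton_right.mpr (by simpa using hXd e)
    · exact Set.disjoint_singleton_left.mpr (by simpa using hXd d)
    · exact Set.disjoint_singleton.mpr fun h => hde (congrArg some (Subtype.ext
        (Option.some_injective _ h)))
  · rintro (_ | d) (_ | e) hde
    · exact hde.elim
    · rcases hM e hde with he | ⟨x, hx, hxe⟩
      · exact ⟨none, Set.mem_insert _ _, some e, rfl, he⟩
      · exact ⟨some x, Set.mem_insert_of_mem _ ⟨x, hx, rfl⟩, some e, rfl, hxe⟩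
    · rcases hM d hde with hd | ⟨x, hx, hxd⟩
      · exact ⟨some d, rfl, none, Set.mem_insert _ _, hd⟩
      · exact ⟨some d, rfl, some x, Set.mem_insert_of_mem _ ⟨x, hx, rfl⟩, hxd.symm⟩
    · exact ⟨some d, rfl, some e, rfl, hde⟩

lemma hasKEqMinor_addVertex_of_iso {t n : ℕ} {G : SimpleGraph V} {H : SimpleGraph W}
    (e : G ≃g H) (hH : ∀ M : Set W, n ≤ M.ncard → HasKEqMinor t (addVertex H M)) {N : Set V}
    (hN : n ≤ N.ncard) : HasKEqMinor t (addVertex G N) :=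
  (hH (e '' N) (by rwa [Set.ncard_image_of_injective N e.injective])).of_isMinorOf
    (addVertex_isMinorOf_of_injective e.symm.toHom e.symm.injective (by simp))

end addVertex

lemma Set.ncard_preimage_val {D s : Set V} (hsD : s ⊆ D) :
    (Subtype.val ⁻¹' s : Set D).ncard = s.ncard :=
  Set.ncard_preimage_of_injective_subset_range Subtype.val_injective (by rwa [Subtype.range_coe])

def IsConnectedDominatorOf (G : SimpleGraph V) (X C : Set V) : Prop :=
  Disjoint X C ∧ (G.induce X).Connected ∧ ∀ c ∈ C, ∃ x ∈ X, G.Adj x c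

def ReachesCliques (k : ℕ) (G : SimpleGraph V) : Prop :=
  ∀ C : Set V, G.IsClique C → C.ncard = k → ∀ w ∉ C,
    ∃ X : Set V, w ∈ X ∧ IsConnectedDominatorOf G X C

lemma IsConnectedDominatorOf.image {G : SimpleGraph V} {G' : SimpleGraph W} {X C : Set V}
    (h : IsConnectedDominatorOf G X C) (f : G →g G') (hf : Function.Injective f) :
    IsConnectedDominatorOf G' (f '' X) (f '' C) := by
  obtain ⟨hXC, hX, hadj⟩ := h
  refine ⟨(Set.disjoint_image_iff hf).mpr hXC, hX.induce_image f, ?_⟩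
  rintro _ ⟨c, hc, rfl⟩
  obtain ⟨x, hx, hxc⟩ := hadj c hc
  exact ⟨f x, Set.mem_image_of_mem f hx, f.map_adj hxc⟩

lemma ReachesCliques.of_iso {k : ℕ} {G : SimpleGraph V} {H : SimpleGraph W} (e : G ≃g H)
    (hH : ReachesCliques k H) : ReachesCliques k G := by
  intro C hC hCk w hwC
  obtain ⟨X, hwX, hX⟩ := hH (e '' C) (hC.image e.toHom)
    (by rw [Set.ncard_image_of_injective C e.injective, hCk])
    (e w) (by rwa [e.injective.mem_set_image])
  refine ⟨e.symm '' X, ⟨e w, hwX, e.symm_apply_apply w⟩, ?_⟩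
  simpa [Set.image_image] using hX.image e.symm.toHom e.symm.injective

lemma ReachesCliques.exists_of_induce {k : ℕ} {G : SimpleGraph V} {D C : Set V}
    (hD : ReachesCliques k (G.induce D)) (hC : G.IsClique C) (hCD : C ⊆ D) (hCk : C.ncard = k)
    {w : V} (hwD : w ∈ D) (hwC : w ∉ C) :
    ∃ X ⊆ D, w ∈ X ∧ IsConnectedDominatorOf G X C := by
  have hCD' : Subtype.val '' (Subtype.val ⁻¹' C : Set D) = C := by
    rw [Subtype.image_preimage_coe, Set.inter_eq_right.mpr hCD]
  obtain ⟨X, hwX, hX⟩ := hD (Subtype.val ⁻¹' C) (isClique_induce_iff.mpr (by rwa [hCD']))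
    (by rw [Set.ncard_preimage_val hCD, hCk]) ⟨w, hwD⟩ hwC
  refine ⟨Subtype.val '' X, Subtype.coe_image_subset D X, ⟨_, hwX, rfl⟩, ?_⟩
  have := hX.image (Embedding.induce D).toHom Subtype.val_injective
  rwa [show ⇑(Embedding.induce D).toHom = Subtype.val from rfl, hCD'] at this

lemma reachesCliques_top (k : ℕ) (α : Type) : ReachesCliques k (⊤ : SimpleGraph α) := by
  intro C _ _ w hwC
  refine ⟨{w}, rfl, Set.disjoint_singleton_left.mpr hwC, induce_singleton_connected _ w,
    fun c hc => ⟨w, rfl, ?_⟩⟩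
  rintro rfl
  exact hwC hc

lemma reachesCliques_completeMultipartiteGraph (k : ℕ) {ι : Type} (P : ι → Type)
    [Nontrivial ι] [∀ i, Nontrivial (P i)] :
    ReachesCliques k (completeMultipartiteGraph P) := by
  intro C hC _ w hwC
  obtain ⟨j, hj⟩ := exists_ne w.1
  obtain ⟨a, b, hab⟩ := exists_pair_ne (P j)
  obtain ⟨u, huj, huC⟩ : ∃ u : Σ i, P i, u.1 = j ∧ u ∉ C := by
    by_contra! h
    exact hC (h ⟨j, a⟩ rfl) (h ⟨j, b⟩ rfl) (by simpa using hab) rfl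
  have hwu : (completeMultipartiteGraph P).Adj w u := fun h => hj (h.trans huj).symm
  refine ⟨{w, u}, Set.mem_insert _ _, ?_, induce_pair_connected_of_adj hwu, fun c _ => ?_⟩
  · simp [Set.disjoint_insert_left, hwC, huC]
  · by_cases hc : w.1 = c.1
    · exact ⟨u, by simp, fun h => hj (huj.symm.trans h |>.trans hc.symm)⟩
    · exact ⟨w, Set.mem_insert _ _, hc⟩

section glue

variable {k : ℕ} {G : SimpleGraph V}

/-- A vertex on the far side of the clique-sum is first routed onto the gluing clique `P ∩ Q`;
unless that clique is `C` itself, one of its vertices off `C` then continues inside `P`. -/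
lemma ReachesCliques.exists_of_glue {P Q C : Set V} (hk : 0 < k) (hPQ : P ∪ Q = Set.univ)
    (hPQk : (P ∩ Q).ncard = k) (hPQc : G.IsClique (P ∩ Q)) (hP : ReachesCliques k (G.induce P))
    (hQ : ReachesCliques k (G.induce Q)) (hC : G.IsClique C) (hCk : C.ncard = k) (hCP : C ⊆ P)
    {w : V} (hwC : w ∉ C) : ∃ X, w ∈ X ∧ IsConnectedDominatorOf G X C := by
  by_cases hwP : w ∈ P
  · obtain ⟨X, -, hX⟩ := hP.exists_of_induce hC hCP hCk hwP hwC
    exact ⟨X, hX⟩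
  have hwQ : w ∈ Q := (hPQ ▸ Set.mem_univ w).resolve_left hwP
  obtain ⟨Y, hYQ, hwY, hYPQ, hYconn, hYadj⟩ :=
    hQ.exists_of_induce hPQc Set.inter_subset_right hPQk hwQ fun h => hwP h.1
  have hYC : Disjoint Y C := Set.disjoint_left.mpr fun y hy hyC =>
    Set.disjoint_left.mp hYPQ hy ⟨hCP hyC, hYQ hy⟩
  by_cases hPQC : P ∩ Q ⊆ C
  · have hCfin : C.Finite := Set.finite_of_ncard_pos (hCk ▸ hk)
    have hC_eq : P ∩ Q = C := Set.eq_of_subset_of_ncard_le hPQC (by omega) hCfin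
    exact ⟨Y, hwY, hYC, hYconn, hC_eq ▸ hYadj⟩
  obtain ⟨d, hdPQ, hdC⟩ := Set.not_subset.mp hPQC
  obtain ⟨Z, -, hdZ, hZC, hZconn, hZadj⟩ := hP.exists_of_induce hC hCP hCk hdPQ.1 hdC
  obtain ⟨y, hy, hyd⟩ := hYadj d hdPQ
  refine ⟨Y ∪ Z, Or.inl hwY, Set.disjoint_union_left.mpr ⟨hYC, hZC⟩,
    connected_induce_union hYconn.preconnected hZconn.preconnected hy hdZ hyd, fun c hc => ?_⟩
  obtain ⟨z, hz, hzc⟩ := hZadj c hc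
  exact ⟨z, Or.inr hz, hzc⟩

lemma ReachesCliques.glue {A B : Set V} (hk : 0 < k) (hAB : A ∪ B = Set.univ)
    (hABk : (A ∩ B).ncard = k) (hABc : G.IsClique (A ∩ B))
    (hsep : ∀ u ∈ A \ B, ∀ v ∈ B \ A, ¬ G.Adj u v) (hA : ReachesCliques k (G.induce A))
    (hB : ReachesCliques k (G.induce B)) : ReachesCliques k G := by
  intro C hC hCk w hwC
  have hCside : C ⊆ A ∨ C ⊆ B := by
    by_contra! h
    obtain ⟨a, haC, haA⟩ := Set.not_subset.mp h.1
    obtain ⟨b, hbC, hbB⟩ := Set.not_subset.mp h.2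
    have haB : a ∈ B := (hAB ▸ Set.mem_univ a).resolve_left haA
    have hbA : b ∈ A := (hAB ▸ Set.mem_univ b).resolve_right hbB
    exact hsep b ⟨hbA, hbB⟩ a ⟨haB, haA⟩ (hC hbC haC fun h => haA (h ▸ hbA))
  rcases hCside with hCA | hCB
  · exact hA.exists_of_glue hk hAB hABk hABc hB hC hCk hCA hwC
  · rw [Set.union_comm] at hAB
    rw [Set.inter_comm] at hABk hABc
    exact hB.exists_of_glue hk hAB hABk hABc hA hC hCk hCB hwC

end glue

lemma IsCockade.reachesCliques {α β : Type} {H₁ : SimpleGraph α} {H₂ : SimpleGraph β} {k : ℕ}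
    (hk : 0 < k) (h₁ : ReachesCliques k H₁) (h₂ : ReachesCliques k H₂) {G : SimpleGraph V}
    (h : IsCockade H₁ H₂ k G) : ReachesCliques k G := by
  induction h with
  | base₁ G hG => exact h₁.of_iso hG.some
  | base₂ G hG => exact h₂.of_iso hG.some
  | glue G A B hAB _ _ hABk hABc hsep _ _ hA hB => exact .glue hk hAB hABk hABc hsep hA hB

lemma hasKEqMinor_addVertex_top {k : ℕ} [Fintype W] (hW : Fintype.card W = k + 2) {N : Set W}
    (hN : k ≤ N.ncard) : HasKEqMinor (k + 3) (addVertex ⊤ N) := by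
  obtain ⟨S, hSN, hSk⟩ := Set.exists_subset_card_eq hN
  obtain ⟨a, b, hab, hS⟩ : ∃ a b, a ≠ b ∧ Sᶜ = {a, b} := by
    rw [← Set.ncard_eq_two]
    have := Set.ncard_add_ncard_compl S
    rw [Nat.card_eq_fintype_card, hW] at this
    omega
  refine hasKEqMinor_of_deleteEdges_le (by simp [hW]) (e₁ := s(none, some a))
    (e₂ := s(none, some b)) (by simpa using hab) (by simp) (by simp) ?_
  rintro (_ | u) (_ | v) huv <;> rw [deleteEdges_adj] at huv
  · exact (huv.1 rfl).elim
  · refine hSN (not_not.mp fun hv => huv.2 ?_)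
    rw [← Set.mem_compl_iff, hS] at hv
    rcases hv with rfl | rfl <;> simp
  · refine hSN (not_not.mp fun hu => huv.2 ?_)
    rw [← Set.mem_compl_iff, hS] at hu
    rcases hu with rfl | rfl <;> simp [Sym2.eq_swap]
  · exact fun h => huv.1 (congrArg some h)

lemma exists_part_subset_of_card_lt {ι : Type} [Fintype ι] {N : Set (Σ _ : ι, Fin 2)}
    (hN : Fintype.card ι < N.ncard) : ∃ j, ⟨j, 0⟩ ∈ N ∧ ⟨j, 1⟩ ∈ N := by
  by_contra! h
  have hinj : Set.InjOn Sigma.fst N := by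
    rintro ⟨i, a⟩ ha ⟨i', b⟩ hb (rfl : i = i')
    fin_cases a <;> fin_cases b
    exacts [rfl, (h i ha hb).elim, (h i hb ha).elim, rfl]
  have := Set.ncard_le_ncard_of_injOn Sigma.fst (fun _ _ => Set.mem_univ _) hinj Set.finite_univ
  rw [Set.ncard_univ, Nat.card_eq_fintype_card] at this
  omega

instance addVertex.decidableAdj (G : SimpleGraph V) [DecidableRel G.Adj] (N : Set V)
    [DecidablePred (· ∈ N)] : DecidableRel (addVertex G N).Adj
  | some u, some w => inferInstanceAs (Decidable (G.Adj u w))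
  | some u, none => inferInstanceAs (Decidable (u ∈ N))
  | none, some w => inferInstanceAs (Decidable (w ∈ N))
  | none, none => isFalse id

/-- Writing `aᵢ, bᵢ` for the two vertices of part `i`, the branch sets are `{v, a₀}`, `{b₀}`,
`{a₁, b₂}`, `{a₂}`, `{b₁}` and the singletons of parts 3 and 4; only the edges `a₃b₃` and
`a₄b₄` are missing. -/
lemma hasKEqMinor_addVertex_K22222_part_zero :
    HasKEqMinor 9 (addVertex K22222 {x | x.1 = 0}) :=
  ⟨s(5, 6), s(7, 8), by decide, by decide, by decide,
    isMinorOf_of_pairs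
      ![none, some ⟨0, 1⟩, some ⟨1, 0⟩, some ⟨2, 0⟩, some ⟨1, 1⟩, some ⟨3, 0⟩, some ⟨3, 1⟩,
        some ⟨4, 0⟩, some ⟨4, 1⟩]
      ![some ⟨0, 0⟩, some ⟨0, 1⟩, some ⟨2, 1⟩, some ⟨2, 0⟩, some ⟨1, 1⟩, some ⟨3, 0⟩,
        some ⟨3, 1⟩, some ⟨4, 0⟩, some ⟨4, 1⟩]
      (by decide) (by decide) (by decide)⟩

lemma hasKEqMinor_addVertex_K22222 {N : Set (Σ _ : Fin 5, Fin 2)} (hN : 6 ≤ N.ncard) :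
    HasKEqMinor 9 (addVertex K22222 N) := by
  obtain ⟨j, hj₀, hj₁⟩ := exists_part_subset_of_card_lt (N := N) (by rw [Fintype.card_fin]; omega)
  let σ : K22222 →g K22222 :=
    ⟨fun x => ⟨Equiv.swap 0 j x.1, x.2⟩, fun h => (Equiv.swap 0 j).injective.ne h⟩
  refine hasKEqMinor_addVertex_K22222_part_zero.of_isMinorOf
    (addVertex_isMinorOf_of_injective σ ?_ ?_)
  · rintro ⟨i, a⟩ ⟨i', b⟩ h
    change (⟨Equiv.swap 0 j i, a⟩ : Σ _ : Fin 5, Fin 2) = ⟨Equiv.swap 0 j i', b⟩ at h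
    simpa using h
  · rintro ⟨i, a⟩ (rfl : i = 0)
    change (⟨Equiv.swap 0 j 0, a⟩ : Σ _ : Fin 5, Fin 2) ∈ N
    rw [Equiv.swap_apply_left]
    fin_cases a
    exacts [hj₀, hj₁]

lemma hasKEqMinor_addVertex_of_glue {t k : ℕ} {G : SimpleGraph V} {A B : Set V} (hk : 0 < k)
    (hAB : A ∪ B = Set.univ) (hABk : (A ∩ B).ncard = k) (hABc : G.IsClique (A ∩ B))
    (hB : ReachesCliques k (G.induce B))
    (ihA : ∀ M : Set A, k + 1 ≤ M.ncard → HasKEqMinor t (addVertex (G.induce A) M))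
    (ihB : ∀ M : Set B, k + 1 ≤ M.ncard → HasKEqMinor t (addVertex (G.induce B) M))
    {N : Set V} (hN : k + 1 ≤ N.ncard) : HasKEqMinor t (addVertex G N) := by
  have of_subset : ∀ D, N ⊆ D →
      (∀ M : Set D, k + 1 ≤ M.ncard → HasKEqMinor t (addVertex (G.induce D) M)) →
      HasKEqMinor t (addVertex G N) := fun D hND ih =>
    (ih (Subtype.val ⁻¹' N) (by rwa [Set.ncard_preimage_val hND])).of_isMinorOf
      (addVertex_isMinorOf_of_injective (Embedding.induce D).toHom Subtype.val_injective
        fun _ h => h)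
  by_cases hNA : N ⊆ A
  · exact of_subset A hNA ihA
  by_cases hNB : N ⊆ B
  · exact of_subset B hNB ihB
  obtain ⟨w, hwN, hwA⟩ := Set.not_subset.mp hNA
  obtain ⟨a, haN, haB⟩ := Set.not_subset.mp hNB
  have hwB : w ∈ B := (hAB ▸ Set.mem_univ w).resolve_left hwA
  have haA : a ∈ A := (hAB ▸ Set.mem_univ a).resolve_right haB
  obtain ⟨X, hXB, hwX, hXAB, hXconn, hXadj⟩ :=
    hB.exists_of_induce hABc Set.inter_subset_right hABk hwB fun h => hwA h.1
  have hXA : Disjoint X A := Set.disjoint_left.mpr fun x hx hxA =>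
    Set.disjoint_left.mp hXAB hx ⟨hxA, hXB hx⟩
  have hM : k + 1 ≤ (Subtype.val ⁻¹' insert a (A ∩ B) : Set A).ncard := by
    rw [Set.ncard_preimage_val (Set.insert_subset haA Set.inter_subset_left),
      Set.ncard_insert_of_notMem (fun h => haB h.2) (Set.finite_of_ncard_pos (hABk ▸ hk)), hABk]
  refine (ihA _ hM).of_isMinorOf (addVertex_induce_isMinorOf_of_contract hXA
    (addVertex_induce_insert_none_connected hXconn hwX hwN) ?_)
  rintro d (hd | hd)
  · exact Or.inl (hd ▸ haN)
  · exact Or.inr (hXadj d hd)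

lemma IsCockade.hasKEqMinor_addVertex {α β : Type} {H₁ : SimpleGraph α} {H₂ : SimpleGraph β}
    {t k : ℕ} (hk : 0 < k) (h₁ : ReachesCliques k H₁) (h₂ : ReachesCliques k H₂)
    (hH₁ : ∀ M : Set α, k + 1 ≤ M.ncard → HasKEqMinor t (addVertex H₁ M))
    (hH₂ : ∀ M : Set β, k + 1 ≤ M.ncard → HasKEqMinor t (addVertex H₂ M))
    {G : SimpleGraph V} (h : IsCockade H₁ H₂ k G) {N : Set V} (hN : k + 1 ≤ N.ncard) :
    HasKEqMinor t (addVertex G N) := by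
  induction h with
  | base₁ G hG => exact hasKEqMinor_addVertex_of_iso hG.some hH₁ hN
  | base₂ G hG => exact hasKEqMinor_addVertex_of_iso hG.some hH₂ hN
  | glue G A B hAB _ _ hABk hABc _ _ hB ihA ihB =>
    exact hasKEqMinor_addVertex_of_glue hk hAB hABk hABc (hB.reachesCliques hk h₁ h₂)
      (fun _ hM => ihA hM) (fun _ hM => ihB hM) hN

theorem cockade_add_vertex {V : Type} (G' : SimpleGraph V) (h : Cockade85 G')
    (N : Set V) (hN : 6 ≤ N.ncard) :
    HasKEqMinor 9 (addVertex G' N) :=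
  h.hasKEqMinor_addVertex (by norm_num) (reachesCliques_top 5 _)
    (reachesCliques_completeMultipartiteGraph 5 _)
    (fun _ => hasKEqMinor_addVertex_top (by simp)) (fun _ => hasKEqMinor_addVertex_K22222) hN
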